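/- Let P_n = p_1 p_2 ⋯ p_n denote the n-th primorial. Then 𝒮(P_n) = ∏_{i=2}^{n} (1 + 1/(p_i - 2)) and 𝒮(P_n) → +∞ as n → ∞ (i.e., the sequence n ↦ 𝒮(P_n), viewed in ℝ, tends to infinity). -/

import Mathlib

/-!
The prime factors of `P n` are `p₀ = 2, p₁, …, p_{n-1}`, so `𝒮 (P n)` is the product of the
factors `(pᵢ - 1) / (pᵢ - 2) = 1 + 1 / (pᵢ - 2)` over `1 ≤ i < n`. A product `∏ (1 + aᵢ)` with
`aᵢ ≥ 0` dominates `1 + ∑ aᵢ`, and `∑ 1 / (pᵢ - 2) ≥ ∑ 1 / pᵢ` diverges by Euler's theorem on the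
reciprocals of the primes.
-/

open Finset Filter

/-- The Sylvester factor `𝒮 n = ∏_{p ∣ n, p odd prime} (p-1)/(p-2)`. -/
noncomputable def sylvester (n : ℕ) : ℚ :=
  ∏ p ∈ n.primeFactors.erase 2, ((p : ℚ) - 1) / ((p : ℚ) - 2)

/-- The sequence of primes in increasing order (0-indexed:
`nthPrime 0 = 2`, `nthPrime 1 = 3`, ...). -/
noncomputable def nthPrime (n : ℕ) : ℕ := Nat.nth Nat.Prime n

/-- The `n`-th primorialSeq `P n = p_1 * p_2 * ⋯ * p_n`. -/
noncomputable def primorialSeq (n : ℕ) : ℕ := ∏ i ∈ Finset.range n, nthPrime i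

theorem Finset.one_add_sum_le_prod_one_add {ι R : Type*} [CommSemiring R] [PartialOrder R]
    [IsOrderedRing R] (s : Finset ι) {f : ι → R} (hf : ∀ i ∈ s, 0 ≤ f i) :
    1 + ∑ i ∈ s, f i ≤ ∏ i ∈ s, (1 + f i) := by
  induction s using Finset.cons_induction with
  | empty => simp
  | cons a s ha ih =>
    have ha0 : 0 ≤ f a := hf a (mem_cons_self a s)
    have hs : ∀ i ∈ s, 0 ≤ f i := fun i hi => hf i (mem_cons_of_mem hi)
    rw [sum_cons, prod_cons]
    calc 1 + (f a + ∑ i ∈ s, f i)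
        ≤ 1 + (f a + ∑ i ∈ s, f i) + f a * ∑ i ∈ s, f i :=
          le_add_of_nonneg_right (mul_nonneg ha0 (sum_nonneg hs))
      _ = (1 + f a) * (1 + ∑ i ∈ s, f i) := by ring
      _ ≤ (1 + f a) * ∏ i ∈ s, (1 + f i) :=
          mul_le_mul_of_nonneg_left (ih hs) (add_nonneg zero_le_one ha0)

theorem tendsto_prod_range_one_add_atTop_of_not_summable {f : ℕ → ℝ} (hf : ∀ n, 0 ≤ f n)
    (h : ¬ Summable f) : Tendsto (fun n => ∏ i ∈ range n, (1 + f i)) atTop atTop := by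
  refine tendsto_atTop_mono (fun n => (range n).one_add_sum_le_prod_one_add fun i _ => hf i) ?_
  exact tendsto_atTop_add_const_left _ 1 ((not_summable_iff_tendsto_nat_atTop_of_nonneg hf).mp h)

theorem nthPrime_injective : Function.Injective nthPrime :=
  Nat.nth_injective Nat.infinite_setOfPred_prime

theorem nthPrime_prime (n : ℕ) : (nthPrime n).Prime :=
  Nat.nth_mem_of_infinite Nat.infinite_setOfPred_prime n

theorem nthPrime_zero : nthPrime 0 = 2 := Nat.nth_prime_zero_eq_two

theorem two_lt_nthPrime {i : ℕ} (hi : i ≠ 0) : 2 < nthPrime i :=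
  nthPrime_zero ▸ Nat.nth_strictMono Nat.infinite_setOfPred_prime (Nat.pos_of_ne_zero hi)

theorem not_summable_one_div_nthPrime : ¬ Summable fun i => 1 / (nthPrime i : ℝ) := by
  intro h
  refine not_summable_one_div_on_primes ((nthPrime_injective.summable_iff fun n hn => ?_).mp ?_)
  · refine Set.indicator_of_notMem (fun hp => hn ?_) _
    exact Nat.range_nth_of_infinite Nat.infinite_setOfPred_prime ▸ hp
  · convert h with i
    exact Set.indicator_of_mem (nthPrime_prime i) _

theorem primeFactors_primorialSeq (n : ℕ) :
    (primorialSeq n).primeFactors = (range n).image nthPrime := by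
  have : primorialSeq n = ∏ p ∈ (range n).image nthPrime, p :=
    (prod_image (f := id) fun i _ j _ h => nthPrime_injective h).symm
  rw [this]
  exact Nat.primeFactors_prod fun p hp => by
    obtain ⟨i, -, rfl⟩ := mem_image.mp hp
    exact nthPrime_prime i

theorem sylvester_primorialSeq (n : ℕ) : sylvester (primorialSeq n) =
    ∏ i ∈ Ico 1 n, (1 + 1 / ((nthPrime i : ℚ) - 2)) := by
  have herase : ((range n).image nthPrime).erase 2 = (Ico 1 n).image nthPrime := by
    rw [← nthPrime_zero, ← image_erase nthPrime_injective, range_eq_Ico, Ico_erase_left,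
      ← Ico_add_one_left_eq_Ioo, zero_add]
  rw [sylvester, primeFactors_primorialSeq, herase,
    prod_image fun i _ j _ h => nthPrime_injective h]
  refine prod_congr rfl fun i hi => ?_
  have : (2 : ℚ) < nthPrime i := by exact_mod_cast two_lt_nthPrime (by simp at hi; omega)
  have : (nthPrime i : ℚ) - 2 ≠ 0 := by linarith
  field_simp
  ring

theorem one_div_nthPrime_le_one_div_nthPrime_sub_two {i : ℕ} (hi : i ≠ 0) :
    1 / (nthPrime i : ℝ) ≤ 1 / ((nthPrime i : ℝ) - 2) := by
  have : (2 : ℝ) < nthPrime i := by exact_mod_cast two_lt_nthPrime hi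
  exact one_div_le_one_div_of_le (by linarith) (by linarith)

theorem not_summable_one_div_nthPrime_one_add_sub_two :
    ¬ Summable fun k => 1 / ((nthPrime (1 + k) : ℝ) - 2) := by
  refine fun h => not_summable_one_div_nthPrime <| (summable_nat_add_iff 1).mp ?_
  simpa [add_comm] using h.of_nonneg_of_le (fun _ => by positivity)
    fun k => one_div_nthPrime_le_one_div_nthPrime_sub_two (by omega)

theorem sylvester_stmt14 :
    (∀ n : ℕ, sylvester (primorialSeq n) =
      ∏ i ∈ Finset.Ico 1 n, (1 + 1 / ((nthPrime i : ℚ) - 2))) ∧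
    Tendsto (fun n => ((sylvester (primorialSeq n) : ℚ) : ℝ)) atTop atTop := by
  refine ⟨sylvester_primorialSeq, ?_⟩
  have hsylv : ∀ n, ((sylvester (primorialSeq n) : ℚ) : ℝ) =
      ∏ k ∈ range (n - 1), (1 + 1 / ((nthPrime (1 + k) : ℝ) - 2)) := fun n => by
    rw [sylvester_primorialSeq, prod_Ico_eq_prod_range]
    push_cast
    rfl
  have hnonneg : ∀ k, 0 ≤ 1 / ((nthPrime (1 + k) : ℝ) - 2) := fun k =>
    (by positivity : (0 : ℝ) ≤ 1 / nthPrime (1 + k)).trans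
      (one_div_nthPrime_le_one_div_nthPrime_sub_two (by omega))
  simp_rw [hsylv]
  exact (tendsto_prod_range_one_add_atTop_of_not_summable hnonneg
    not_summable_one_div_nthPrime_one_add_sub_two).comp (tendsto_sub_atTop_nat 1)
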